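/- arXiv:1208.5376 — 2 statements merged into one kernel-verified Lean document; each statement's English description precedes it below -/
import Mathlib

section
/- Conditional intensity ratio for the Schlather model: with Σ = [[Σ_s,Σ_{sx}],[Σ_{xs},Σ_x]] positive definite, a_x(z) = zᵀΣ_x⁻¹z > 0, λ_x(z) = π^{−(k−1)/2}|Σ_x|^{−1/2} a_x(z)^{−(k+1)/2} Γ((k+1)/2) and λ_{(s,x)}(u,z) defined analogously in dimension m+k, the ratio λ_{(s,x)}(u,z)/λ_x(z) equals the multivariate Student density with k+1 degrees of freedom, location μ = Σ_{sx}Σ_x⁻¹z and scale Σ̃ = (a_x(z)/(k+1))(Σ_s − Σ_{sx}Σ_x⁻¹Σ_{xs}), evaluated at u. -/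
open Matrix Real
open scoped ComplexOrder

/-!
With `S = Σ_s − Σ_{sx} Σ_x⁻¹ Σ_{xs}` the Schur complement of `Σ_x`, positive definite together
with `Σ`, the block formulas give `det Σ = det Σ_x · det S` and
`(u, z)ᵀ Σ⁻¹ (u, z) = (u − μ)ᵀ S⁻¹ (u − μ) + a_x(z)` with `μ = Σ_{sx} Σ_x⁻¹ z`. After this
substitution `det Σ_x` cancels from the ratio, and since `1 + q / a_x(z) = (q + a_x(z)) / a_x(z)`
what is left is an identity between real powers of `π`, `k + 1`, `a_x(z)`, `det S` and
`q + a_x(z)`, checked on logarithms.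
-/

namespace Matrix

variable {m n : Type*} [Fintype m] [Fintype n] [DecidableEq m] [DecidableEq n]

theorem det_fromBlocks_of_isUnit_det₂₂ {α : Type*} [CommRing α] (A : Matrix m m α)
    (B : Matrix m n α) (C : Matrix n m α) {D : Matrix n n α} (hD : IsUnit D.det) :
    (fromBlocks A B C D).det = D.det * (A - B * D⁻¹ * C).det := by
  let := D.invertibleOfIsUnitDet hD
  rw [det_fromBlocks₂₂, invOf_eq_nonsing_inv]

theorem dotProduct_inv_fromBlocks_mulVec {α : Type*} [CommRing α] (A : Matrix m m α)
    (B : Matrix m n α) (C : Matrix n m α) {D : Matrix n n α} (hD : IsUnit D.det)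
    (hS : IsUnit (A - B * D⁻¹ * C).det) (x : m → α) (y : n → α) :
    Sum.elim x y ⬝ᵥ (fromBlocks A B C D)⁻¹ *ᵥ Sum.elim x y =
      (x - y ᵥ* (D⁻¹ * C)) ⬝ᵥ (A - B * D⁻¹ * C)⁻¹ *ᵥ (x - (B * D⁻¹) *ᵥ y)
        + y ⬝ᵥ D⁻¹ *ᵥ y := by
  let := D.invertibleOfIsUnitDet hD
  let := (A - B * D⁻¹ * C).invertibleOfIsUnitDet hS
  let := (fromBlocks A B C D).invertibleOfIsUnitDet
    (by rw [det_fromBlocks_of_isUnit_det₂₂ A B C hD]; exact hD.mul hS)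
  rw [← invOf_eq_nonsing_inv (fromBlocks A B C D), invOf_fromBlocks₂₂_eq]
  simp only [invOf_eq_nonsing_inv, fromBlocks_mulVec, dotProduct_block, Sum.elim_comp_inl,
    Sum.elim_comp_inr, sub_dotProduct, dotProduct_sub, mulVec_sub, dotProduct_add, add_mulVec,
    neg_mulVec, dotProduct_neg, ← dotProduct_mulVec, ← mulVec_mulVec]
  abel

theorem dotProduct_smul_inv_mulVec {K : Type*} [Field K] {S : Matrix n n K} (hS : IsUnit S.det)
    {c : K} (hc : c ≠ 0) (v : n → K) :
    v ⬝ᵥ (c • S)⁻¹ *ᵥ v = c⁻¹ * (v ⬝ᵥ S⁻¹ *ᵥ v) := by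
  let := invertibleOfNonzero hc
  rw [Matrix.inv_smul S c hS, invOf_eq_inv, smul_mulVec, dotProduct_smul, smul_eq_mul]

theorem PosDef.schur_complement₂₂ {𝕜 : Type*} [RCLike 𝕜] {A : Matrix m m 𝕜}
    {B : Matrix m n 𝕜} {D : Matrix n n 𝕜} (h : (fromBlocks A B Bᴴ D).PosDef) :
    (A - B * D⁻¹ * Bᴴ).PosDef := by
  have hD : D.PosDef := h.submatrix Sum.inr_injective
  let := hD.isUnit.invertible
  refine ((PosDef.fromBlocks₂₂ A B hD).mp h.posSemidef).posDef_iff_det_ne_zero.mpr ?_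
  have hdet := h.det_pos
  rw [det_fromBlocks_of_isUnit_det₂₂ A B Bᴴ ((isUnit_iff_isUnit_det D).mp hD.isUnit)] at hdet
  exact right_ne_zero_of_mul hdet.ne'

end Matrix

theorem intensity_ratio_powers_eq_student (m : ℕ) {k a dS dX q : ℝ}
    (hk : 0 < k + 1) (ha : 0 < a) (hdS : 0 < dS) (hdX : 0 < dX) (hq : 0 ≤ q) :
    π ^ (-((m + k : ℝ) - 1) / 2) * (dX * dS) ^ (-(1 : ℝ) / 2)
        * (q + a) ^ (-((m + k : ℝ) + 1) / 2)
      / (π ^ (-(k - 1) / 2) * dX ^ (-(1 : ℝ) / 2) * a ^ (-(k + 1) / 2))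
    = π ^ (-(m : ℝ) / 2) * (k + 1) ^ (-(m : ℝ) / 2) * ((a / (k + 1)) ^ m * dS) ^ (-(1 : ℝ) / 2)
        * ((q + a) / a) ^ (-((m : ℝ) + (k + 1)) / 2) := by
  have hqa : 0 < q + a := by positivity
  have hscale : 0 < (a / (k + 1)) ^ m * dS := by positivity
  simp only [rpow_def_of_pos, pi_pos, hk, ha, hdX, hqa, hscale, mul_pos, hdS, div_pos,
    ← exp_add, ← exp_sub, log_mul, log_div, log_pow, ne_eq, hk.ne', ha.ne', hdS.ne', hdX.ne',
    hqa.ne', (pow_pos (div_pos ha hk) m).ne', not_false_eq_true]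
  ring_nf

theorem intensity_ratio_eq_student (m : ℕ) {k a dS dX q : ℝ}
    (hk : 0 < k + 1) (ha : 0 < a) (hdS : 0 < dS) (hdX : 0 < dX) (hq : 0 ≤ q) :
    (π ^ (-((m + k : ℝ) - 1) / 2) * (dX * dS) ^ (-(1 : ℝ) / 2)
        * (q + a) ^ (-((m + k : ℝ) + 1) / 2) * Gamma (((m + k : ℝ) + 1) / 2))
      / (π ^ (-(k - 1) / 2) * dX ^ (-(1 : ℝ) / 2) * a ^ (-(k + 1) / 2) * Gamma ((k + 1) / 2))
    = π ^ (-(m : ℝ) / 2) * (k + 1) ^ (-(m : ℝ) / 2) * ((a / (k + 1)) ^ m * dS) ^ (-(1 : ℝ) / 2)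
        * (1 + (a / (k + 1))⁻¹ * q / (k + 1)) ^ (-((m : ℝ) + (k + 1)) / 2)
        * (Gamma (((m : ℝ) + (k + 1)) / 2) / Gamma ((k + 1) / 2)) := by
  have hbracket : 1 + (a / (k + 1))⁻¹ * q / (k + 1) = (q + a) / a := by
    field_simp
    ring
  rw [mul_div_mul_comm, intensity_ratio_powers_eq_student m hk ha hdS hdX hq, hbracket,
    show ((m + k : ℝ) + 1) / 2 = ((m : ℝ) + (k + 1)) / 2 by ring]

theorem schlather_conditional_intensity_is_student_general (m k : ℕ)
    (Ss : Matrix (Fin m) (Fin m) ℝ) (Ssx : Matrix (Fin m) (Fin k) ℝ)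
    (Sxs : Matrix (Fin k) (Fin m) ℝ) (Sx : Matrix (Fin k) (Fin k) ℝ)
    (hpd : (Matrix.fromBlocks Ss Ssx Sxs Sx).PosDef)
    (u : Fin m → ℝ) (z : Fin k → ℝ) (ha : 0 < z ⬝ᵥ Sx⁻¹ *ᵥ z) :
    (π ^ (-((m + k : ℝ) - 1) / 2) * (Matrix.fromBlocks Ss Ssx Sxs Sx).det ^ (-(1 : ℝ) / 2)
        * (Sum.elim u z ⬝ᵥ (Matrix.fromBlocks Ss Ssx Sxs Sx)⁻¹ *ᵥ Sum.elim u z)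
            ^ (-((m + k : ℝ) + 1) / 2)
        * Real.Gamma (((m + k : ℝ) + 1) / 2))
      / (π ^ (-((k : ℝ) - 1) / 2) * Sx.det ^ (-(1 : ℝ) / 2)
          * (z ⬝ᵥ Sx⁻¹ *ᵥ z) ^ (-((k : ℝ) + 1) / 2) * Real.Gamma (((k : ℝ) + 1) / 2))
    = π ^ (-(m : ℝ) / 2) * ((k : ℝ) + 1) ^ (-(m : ℝ) / 2)
        * (((z ⬝ᵥ Sx⁻¹ *ᵥ z) / ((k : ℝ) + 1)) • (Ss - Ssx * Sx⁻¹ * Sxs)).det ^ (-(1 : ℝ) / 2)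
        * (1 + (u - (Ssx * Sx⁻¹) *ᵥ z) ⬝ᵥ
              (((z ⬝ᵥ Sx⁻¹ *ᵥ z) / ((k : ℝ) + 1)) • (Ss - Ssx * Sx⁻¹ * Sxs))⁻¹ *ᵥ
              (u - (Ssx * Sx⁻¹) *ᵥ z) / ((k : ℝ) + 1)) ^ (-((m : ℝ) + ((k : ℝ) + 1)) / 2)
        * (Real.Gamma (((m : ℝ) + ((k : ℝ) + 1)) / 2) / Real.Gamma (((k : ℝ) + 1) / 2)) := by
  obtain ⟨-, rfl, -, hSx_symm⟩ := isHermitian_fromBlocks_iff.mp hpd.isHermitian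
  have hSx : Sx.PosDef := hpd.submatrix Sum.inr_injective
  have hS := hpd.schur_complement₂₂
  have hSx_det : IsUnit Sx.det := hSx.det_pos.ne'.isUnit
  have hS_det : IsUnit (Ss - Ssx * Sx⁻¹ * Ssxᴴ).det := hS.det_pos.ne'.isUnit
  have hlocation : z ᵥ* (Sx⁻¹ * Ssxᴴ) = (Ssx * Sx⁻¹) *ᵥ z := by
    rw [← vecMul_transpose, transpose_mul, transpose_nonsing_inv,
      ← conjTranspose_eq_transpose_of_trivial, ← conjTranspose_eq_transpose_of_trivial, hSx_symm]
  rw [det_fromBlocks_of_isUnit_det₂₂ _ _ _ hSx_det,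
    dotProduct_inv_fromBlocks_mulVec _ _ _ hSx_det hS_det, hlocation, det_smul, Fintype.card_fin,
    dotProduct_smul_inv_mulVec hS_det (by positivity)]
  exact intensity_ratio_eq_student m (by positivity) ha hS.det_pos hSx.det_pos
    (by simpa using hS.inv.posSemidef.dotProduct_mulVec_nonneg (u - (Ssx * Sx⁻¹) *ᵥ z))

/-- The ratio of Schlather intensities is the multivariate Student density with
`k + 1` degrees of freedom, location `Σ_{sx} Σ_x⁻¹ z` and scale
`(a_x(z)/(k+1)) (Σ_s − Σ_{sx} Σ_x⁻¹ Σ_{xs})`. -/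
theorem schlather_conditional_intensity_is_student (m k : ℕ)
    (Ss : Matrix (Fin m) (Fin m) ℝ) (Ssx : Matrix (Fin m) (Fin k) ℝ)
    (Sxs : Matrix (Fin k) (Fin m) ℝ) (Sx : Matrix (Fin k) (Fin k) ℝ)
    (hsym : (Matrix.fromBlocks Ss Ssx Sxs Sx).IsSymm)
    (hpd : (Matrix.fromBlocks Ss Ssx Sxs Sx).PosDef)
    (u : Fin m → ℝ) (z : Fin k → ℝ) (ha : 0 < z ⬝ᵥ Sx⁻¹ *ᵥ z) :
    (π ^ (-((m + k : ℝ) - 1) / 2) * (Matrix.fromBlocks Ss Ssx Sxs Sx).det ^ (-(1 : ℝ) / 2)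
        * (Sum.elim u z ⬝ᵥ (Matrix.fromBlocks Ss Ssx Sxs Sx)⁻¹ *ᵥ Sum.elim u z)
            ^ (-((m + k : ℝ) + 1) / 2)
        * Real.Gamma (((m + k : ℝ) + 1) / 2))
      / (π ^ (-((k : ℝ) - 1) / 2) * Sx.det ^ (-(1 : ℝ) / 2)
          * (z ⬝ᵥ Sx⁻¹ *ᵥ z) ^ (-((k : ℝ) + 1) / 2) * Real.Gamma (((k : ℝ) + 1) / 2))
    = π ^ (-(m : ℝ) / 2) * ((k : ℝ) + 1) ^ (-(m : ℝ) / 2)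
        * (((z ⬝ᵥ Sx⁻¹ *ᵥ z) / ((k : ℝ) + 1)) • (Ss - Ssx * Sx⁻¹ * Sxs)).det ^ (-(1 : ℝ) / 2)
        * (1 + (u - (Ssx * Sx⁻¹) *ᵥ z) ⬝ᵥ
              (((z ⬝ᵥ Sx⁻¹ *ᵥ z) / ((k : ℝ) + 1)) • (Ss - Ssx * Sx⁻¹ * Sxs))⁻¹ *ᵥ
              (u - (Ssx * Sx⁻¹) *ᵥ z) / ((k : ℝ) + 1)) ^ (-((m : ℝ) + ((k : ℝ) + 1)) / 2)
        * (Real.Gamma (((m : ℝ) + ((k : ℝ) + 1)) / 2) / Real.Gamma (((k : ℝ) + 1) / 2)) :=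
  schlather_conditional_intensity_is_student_general m k Ss Ssx Sxs Sx hpd u z ha
end

section
/- Change of variables for the Brown–Resnick intensity: for a measurable nonnegative function f on ℝ^k (a density) and γ ∈ ℝ^k, ∫₀^∞ ∫_{ℝ^k} 1{(ζ e^{y₁−γ₁},…,ζ e^{y_k−γ_k}) ∈ A} f(y) dy ζ⁻² dζ = ∫_A (∫_ℝ f(log z − r·1 + γ) e^{−r} dr) ∏ᵢ zᵢ⁻¹ dz, for any Borel set A ⊆ (0,∞)^k. -/
open MeasureTheory Set Real
open scoped ENNReal

/-!
Substituting `ζ = eˢ` turns `ζ⁻² dζ` into `e⁻ˢ ds`, and translating `y = x - s·1 + γ` turns the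
point `ζ e^{y-γ}` into `eˣ` (componentwise). By Tonelli the left-hand side becomes
`∫ 1_A(eˣ) J(x) dx` with `J(x) = ∫ f(x - r·1 + γ) e^{-r} dr`, and the substitution `z = eˣ`,
whose Jacobian is `∏ zᵢ`, gives the right-hand side.
-/

theorem lintegral_comp_exp (g : ℝ → ℝ≥0∞) :
    ∫⁻ s, ENNReal.ofReal (exp s) * g (exp s) = ∫⁻ ζ in Ioi 0, g ζ := by
  have := lintegral_image_eq_lintegral_abs_deriv_mul MeasurableSet.univ
    (fun s _ => (hasDerivAt_exp s).hasDerivWithinAt) exp_injective.injOn g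
  rw [image_univ, range_exp, Measure.restrict_univ] at this
  simpa only [abs_of_pos (exp_pos _)] using this.symm

section PiExp

variable {ι : Type*} [Fintype ι]

theorem hasFDerivAt_pi_exp (x : ι → ℝ) :
    HasFDerivAt (fun x i => exp (x i))
      (ContinuousLinearMap.pi fun i =>
        (ContinuousLinearMap.toSpanSingleton ℝ (exp (x i))).comp (ContinuousLinearMap.proj i)) x :=
  hasFDerivAt_pi.2 fun i =>
    HasFDerivAt.comp (g := exp) x (hasDerivAt_exp (x i)) (hasFDerivAt_apply i x)

theorem lintegral_comp_pi_exp (g : (ι → ℝ) → ℝ≥0∞) {s : Set (ι → ℝ)} (hs : MeasurableSet s) :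
    ∫⁻ x in s, ENNReal.ofReal (∏ i, exp (x i)) * g (fun i => exp (x i))
      = ∫⁻ z in (fun x i => exp (x i)) '' s, g z := by
  rw [lintegral_image_eq_lintegral_abs_det_fderiv_mul volume hs
    (fun x _ => (hasFDerivAt_pi_exp x).hasFDerivWithinAt)
    (fun x _ y _ h => funext fun i => exp_injective (congrFun h i))]
  simp only [ContinuousLinearMap.det_pi, ContinuousLinearMap.det_toSpanSingleton,
    Finset.abs_prod, abs_exp]

theorem setLIntegral_mul_prod_inv_eq_comp_exp (g : (ι → ℝ) → ℝ≥0∞) {A : Set (ι → ℝ)}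
    (hA : MeasurableSet A) (hApos : A ⊆ {z | ∀ i, 0 < z i}) :
    ∫⁻ z in A, g z * ENNReal.ofReal (∏ i, (z i)⁻¹)
      = ∫⁻ x in (fun (x : ι → ℝ) i => exp (x i)) ⁻¹' A, g (fun i => exp (x i)) := by
  have hA_range : A ⊆ range fun (x : ι → ℝ) i => exp (x i) := fun z hz =>
    ⟨fun i => log (z i), funext fun i => exp_log (hApos hz i)⟩
  have hmeas : MeasurableSet ((fun (x : ι → ℝ) i => exp (x i)) ⁻¹' A) :=
    (by fun_prop : Measurable fun (x : ι → ℝ) i => exp (x i)) hA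
  nth_rw 1 [← image_preimage_eq_of_subset hA_range]
  rw [← lintegral_comp_pi_exp _ hmeas]
  refine setLIntegral_congr_fun hmeas fun x _ => ?_
  have hprod : (∏ i, exp (x i)) * ∏ i, (exp (x i))⁻¹ = 1 := by
    rw [← Finset.prod_mul_distrib]
    exact Finset.prod_eq_one fun i _ => mul_inv_cancel₀ (exp_ne_zero _)
  rw [mul_left_comm, ← ENNReal.ofReal_mul (Finset.prod_pos fun i _ => exp_pos _).le, hprod,
    ENNReal.ofReal_one, mul_one]

theorem lintegral_Ioi_lintegral_mul_exp_sub_eq (F : (ι → ℝ) → ℝ≥0∞) (hF : Measurable F)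
    {f : (ι → ℝ) → ℝ} (hf : Measurable f) (γ : ι → ℝ) :
    ∫⁻ ζ in Ioi 0, ∫⁻ y, F (fun i => ζ * exp (y i - γ i)) * ENNReal.ofReal (f y)
        * ENNReal.ofReal (ζ ^ (-2 : ℝ))
      = ∫⁻ x : ι → ℝ, F (fun i => exp (x i))
          * ∫⁻ r, ENNReal.ofReal (f fun i => x i - r + γ i) * ENNReal.ofReal (exp (-r)) := by
  have hshift : ∀ s, ENNReal.ofReal (exp s) * ∫⁻ y, F (fun i => exp s * exp (y i - γ i))
        * ENNReal.ofReal (f y) * ENNReal.ofReal (exp s ^ (-2 : ℝ))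
      = ∫⁻ x : ι → ℝ, F (fun i => exp (x i))
          * (ENNReal.ofReal (f fun i => x i - s + γ i) * ENNReal.ofReal (exp (-s))) := by
    intro s
    have hjac : ENNReal.ofReal (exp s) * ENNReal.ofReal (exp s ^ (-2 : ℝ))
        = ENNReal.ofReal (exp (-s)) := by
      rw [← ENNReal.ofReal_mul (exp_pos s).le, ← exp_mul, ← exp_add]
      ring_nf
    rw [← lintegral_const_mul' _ _ ENNReal.ofReal_ne_top,
      ← lintegral_add_right_eq_self _ fun i => γ i - s]
    refine lintegral_congr fun y => ?_
    have hexp : (fun i => exp s * exp ((y + fun i => γ i - s) i - γ i)) = fun i => exp (y i) := by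
      funext i
      rw [← exp_add, Pi.add_apply]
      ring_nf
    have harg : (y + fun i => γ i - s) = fun i => y i - s + γ i := by
      funext i
      rw [Pi.add_apply]
      ring
    rw [hexp, harg, ← hjac]
    ring
  have hmeas : Measurable (Function.uncurry fun (x : ι → ℝ) (r : ℝ) => F (fun i => exp (x i))
      * (ENNReal.ofReal (f fun i => x i - r + γ i) * ENNReal.ofReal (exp (-r)))) := by
    fun_prop
  calc _ = ∫⁻ s, ∫⁻ x : ι → ℝ, F (fun i => exp (x i))
          * (ENNReal.ofReal (f fun i => x i - s + γ i) * ENNReal.ofReal (exp (-s))) := by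
        rw [← lintegral_comp_exp]
        exact lintegral_congr hshift
    _ = _ := by
        rw [← lintegral_lintegral_swap hmeas.aemeasurable]
        exact lintegral_congr fun x => lintegral_const_mul _ (by fun_prop)

end PiExp

theorem brown_resnick_change_of_variables_general (k : ℕ)
    (f : (Fin k → ℝ) → ℝ) (hf : Measurable f)
    (γ : Fin k → ℝ) (A : Set (Fin k → ℝ)) (hA : MeasurableSet A)
    (hApos : A ⊆ {z | ∀ i, 0 < z i}) :
    ∫⁻ ζ in Ioi (0 : ℝ),
        ∫⁻ y : Fin k → ℝ,
          (A.indicator (fun _ => (1 : ℝ≥0∞)) fun i => ζ * Real.exp (y i - γ i))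
            * ENNReal.ofReal (f y) * ENNReal.ofReal (ζ ^ (-2 : ℝ))
      = ∫⁻ z in A,
          (∫⁻ r : ℝ,
              ENNReal.ofReal (f fun i => Real.log (z i) - r + γ i)
                * ENNReal.ofReal (Real.exp (-r)))
            * ENNReal.ofReal (∏ i, (z i)⁻¹) := by
  have hmeas : MeasurableSet ((fun (x : Fin k → ℝ) i => exp (x i)) ⁻¹' A) :=
    (by fun_prop : Measurable fun (x : Fin k → ℝ) i => exp (x i)) hA
  rw [lintegral_Ioi_lintegral_mul_exp_sub_eq _ (measurable_const.indicator hA) hf,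
    setLIntegral_mul_prod_inv_eq_comp_exp _ hA hApos, ← lintegral_indicator hmeas]
  refine lintegral_congr fun x => ?_
  by_cases hx : (fun i => exp (x i)) ∈ A <;> simp [hx]

/-- Change of variables `z = ζ exp(y − γ)`, `r = log ζ` for the Brown--Resnick
intensity: the Poisson integral of a density `f` transported by
`(ζ, y) ↦ ζ e^{y−γ}` equals the integral over `A` of
`(∫ f(log z − r·1 + γ) e^{−r} dr) ∏ zᵢ⁻¹`. -/
theorem brown_resnick_change_of_variables (k : ℕ)
    (f : (Fin k → ℝ) → ℝ) (hf : Measurable f) (hfnn : ∀ y, 0 ≤ f y)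
    (γ : Fin k → ℝ) (A : Set (Fin k → ℝ)) (hA : MeasurableSet A)
    (hApos : A ⊆ {z | ∀ i, 0 < z i}) :
    ∫⁻ ζ in Ioi (0 : ℝ),
        ∫⁻ y : Fin k → ℝ,
          (A.indicator (fun _ => (1 : ℝ≥0∞)) fun i => ζ * Real.exp (y i - γ i))
            * ENNReal.ofReal (f y) * ENNReal.ofReal (ζ ^ (-2 : ℝ))
      = ∫⁻ z in A,
          (∫⁻ r : ℝ,
              ENNReal.ofReal (f fun i => Real.log (z i) - r + γ i)
                * ENNReal.ofReal (Real.exp (-r)))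
            * ENNReal.ofReal (∏ i, (z i)⁻¹) :=
  brown_resnick_change_of_variables_general k f hf γ A hA hApos
end
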